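/- Let n ≥ 2. For the loss function L of an n-shortcut network whose activation functions σ_pre, σ_mid, σ_post are C^∞ and satisfy σ_mid(0) = σ_post(0) = 0, the zero weight configuration w = 0 is an (n−1)-th order stationary point of L: for every 1 ≤ k ≤ n−1, the k-th (Fréchet) derivative of L at w = 0 is the zero multilinear map; equivalently, L(w) = L(0) + o(‖w‖₂^{n−1}) as w → 0. -/

import Mathlib

noncomputable section

open scoped BigOperators

/-- Entrywise application of a scalar function to a vector. -/
def emap {d : ℕ} (σ : ℝ → ℝ) (v : Fin d → ℝ) : Fin d → ℝ := fun i => σ (v i)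

/-- Matrix–vector product. -/
def mvec {d : ℕ} (M : Fin d → Fin d → ℝ) (v : Fin d → ℝ) : Fin d → ℝ :=
  fun i => ∑ j, M i j * v j

/-- The transformation path with `k` weight matrices applied to `v`:
`a₁ = W₀ v`, `a_{l+1} = W_l σmid.(a_l)`; `chain σmid W k v = a_k`. -/
def chain {d : ℕ} (σmid : ℝ → ℝ) (W : ℕ → Fin d → Fin d → ℝ) :
    ℕ → (Fin d → ℝ) → (Fin d → ℝ)
  | 0, v => v
  | k + 1, v => mvec (W k) (if k = 0 then v else emap σmid (chain σmid W k v))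

/-- One residual unit of an `n`-shortcut network:
`u(x) = σpost.(Wⁿ σmid.(⋯ σmid.(W¹ σpre.(x)))) + x`. -/
def resUnit {d : ℕ} (σpre σmid σpost : ℝ → ℝ) (n : ℕ) (W : ℕ → Fin d → Fin d → ℝ)
    (x : Fin d → ℝ) : Fin d → ℝ :=
  fun i => σpost (chain σmid W n (emap σpre x) i) + x i

/-- The `n`-shortcut network with `R` residual units: composition `u_R ∘ ⋯ ∘ u_1`. -/
def net {d : ℕ} (σpre σmid σpost : ℝ → ℝ) (n : ℕ) (W : ℕ → ℕ → Fin d → Fin d → ℝ) :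
    ℕ → (Fin d → ℝ) → (Fin d → ℝ)
  | 0, x => x
  | r + 1, x => resUnit σpre σmid σpost n (W r) (net σpre σmid σpost n W r x)

/-- Extend finitely indexed weights to ℕ-indexed weights (by zero out of range). -/
def extendW {R n d : ℕ} (W : Fin R → Fin n → Fin d → Fin d → ℝ) :
    ℕ → ℕ → Fin d → Fin d → ℝ :=
  fun r l => if h : r < R ∧ l < n then W ⟨r, h.1⟩ ⟨l, h.2⟩ else 0

/-- The loss function of an `n`-shortcut network with `R` residual units,
as a function of the collection of all the weight matrices. -/
def loss {d m : ℕ} (σpre σmid σpost : ℝ → ℝ) (n R : ℕ) (X Y : Fin m → Fin d → ℝ)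
    (W : Fin R → Fin n → Fin d → Fin d → ℝ) : ℝ :=
  (1 / (2 * (m : ℝ))) *
    ∑ μ : Fin m, ∑ i, (net σpre σmid σpost n (extendW W) R (X μ) i - Y μ i) ^ 2

/-- The coordinate direction in weight space corresponding to the parameter `w^{r,l}_{i,j}`. -/
def coordDir (R n d : ℕ) (r : Fin R) (l : Fin n) (i j : Fin d) :
    Fin R → Fin n → Fin d → Fin d → ℝ :=
  fun r' l' i' j' => if r' = r ∧ l' = l ∧ i' = i ∧ j' = j then 1 else 0

/-- Second-order partial derivative of `f` at `0` along the directions `v₁, v₂`. -/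
def d2 {E : Type*} [NormedAddCommGroup E] [NormedSpace ℝ E] (f : E → ℝ) (v₁ v₂ : E) : ℝ :=
  fderiv ℝ (fun w => fderiv ℝ f w v₂) (0 : E) v₁


section FlatLemmas


variable {E : Type} [NormedAddCommGroup E] [NormedSpace ℝ E]

/-- `f` is `p`-flat at `0`: smooth and all iterated derivatives of order `< p` vanish at `0`. -/
def Flat {F : Type} [NormedAddCommGroup F] [NormedSpace ℝ F] (p : ℕ) (f : E → F) : Prop :=
  ContDiff ℝ (⊤ : ℕ∞) f ∧ ∀ j, j < p → iteratedFDeriv ℝ j f 0 = 0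

variable {F G H : Type} [NormedAddCommGroup F] [NormedSpace ℝ F]
  [NormedAddCommGroup G] [NormedSpace ℝ G] [NormedAddCommGroup H] [NormedSpace ℝ H]

theorem Flat.contDiff {p : ℕ} {f : E → F} (hf : Flat p f) : ContDiff ℝ (⊤ : ℕ∞) f := hf.1

theorem Flat.mono {p q : ℕ} {f : E → F} (hf : Flat p f) (h : q ≤ p) : Flat q f :=
  ⟨hf.1, fun j hj => hf.2 j (lt_of_lt_of_le hj h)⟩

theorem flat_of_contDiff {f : E → F} (hf : ContDiff ℝ (⊤ : ℕ∞) f) : Flat 0 f :=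
  ⟨hf, fun j hj => absurd hj (Nat.not_lt_zero j)⟩

theorem Flat.zero_eq {p : ℕ} {f : E → F} (hf : Flat p f) (hp : 1 ≤ p) : f 0 = 0 := by
  have h := hf.2 0 hp
  have := congrFun (congrArg DFunLike.coe h) (fun i => (0:E))
  simpa [iteratedFDeriv_zero_apply] using this

theorem flat_zero_fun (p : ℕ) : Flat p (fun _ : E => (0 : F)) :=
  ⟨contDiff_const, fun j _ => by rw [iteratedFDeriv_zero_fun]; rfl⟩

theorem flat_succ {p : ℕ} {f : E → F} (hf : ContDiff ℝ (⊤ : ℕ∞) f) (h0 : f 0 = 0)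
    (hd : Flat p (fderiv ℝ f)) : Flat (p + 1) f := by
  refine ⟨hf, fun j hj => ?_⟩
  match j with
  | 0 => ext m; simp [iteratedFDeriv_zero_apply, h0]
  | j + 1 =>
    ext m
    rw [iteratedFDeriv_succ_apply_right]
    rw [show (fun y => fderiv ℝ f y) = fderiv ℝ f from rfl, hd.2 j (by omega)]
    simp

theorem Flat.fderiv' {p : ℕ} {f : E → F} (hf : Flat p f) : Flat (p - 1) (fderiv ℝ f) := by
  refine ⟨hf.1.fderiv_right (by simp), fun j hj => ?_⟩
  ext m v
  have h1 : iteratedFDeriv ℝ (j + 1) f 0 = 0 := hf.2 (j + 1) (by omega)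
  have h2 := iteratedFDeriv_succ_apply_right (𝕜 := ℝ) (f := f) (x := (0:E))
    (Fin.snoc m v)
  rw [h1] at h2
  simp only [Fin.init_snoc, Fin.snoc_last, ContinuousMultilinearMap.zero_apply] at h2
  simpa using h2.symm

theorem Flat.add {p : ℕ} {f g : E → F} (hf : Flat p f) (hg : Flat p g) :
    Flat p (fun x => f x + g x) := by
  refine ⟨hf.1.add hg.1, fun j hj => ?_⟩
  have : iteratedFDeriv ℝ j (f + g) (0:E) =
      iteratedFDeriv ℝ j f 0 + iteratedFDeriv ℝ j g 0 :=
    iteratedFDeriv_add_apply (hf.1.of_le (by exact_mod_cast le_top)).contDiffAt (hg.1.of_le (by exact_mod_cast le_top)).contDiffAt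
  rw [show (fun x => f x + g x) = f + g from rfl, this, hf.2 j hj, hg.2 j hj, add_zero]

theorem Flat.sum {p : ℕ} {ι : Type*} (s : Finset ι) {f : ι → E → F}
    (hf : ∀ a ∈ s, Flat p (f a)) : Flat p (fun x => ∑ a ∈ s, f a x) := by
  classical
  induction s using Finset.induction_on with
  | empty => simpa using flat_zero_fun p
  | @insert a s hnot ih =>
    simp only [Finset.sum_insert hnot]
    exact (hf a (Finset.mem_insert_self a s)).add
      (ih fun b hb => hf b (Finset.mem_insert_of_mem hb))

/-- Key lemma: a continuous bilinear combination of a `p`-flat and a `q`-flat function is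
`(p+q)`-flat. -/
theorem flat_bilin : ∀ (N : ℕ) {F G H : Type}
    [NormedAddCommGroup F] [NormedSpace ℝ F] [NormedAddCommGroup G] [NormedSpace ℝ G]
    [NormedAddCommGroup H] [NormedSpace ℝ H]
    (B : F →L[ℝ] G →L[ℝ] H) (p q : ℕ) (f : E → F) (g : E → G),
    p + q ≤ N → Flat p f → Flat q g → Flat (p + q) (fun x => B (f x) (g x)) := by
  intro N
  induction N with
  | zero =>
    intro F G H _ _ _ _ _ _ B p q f g hpq hf hg
    obtain ⟨rfl, rfl⟩ : p = 0 ∧ q = 0 := by omega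
    exact flat_of_contDiff (B.isBoundedBilinearMap.contDiff.comp (hf.1.prodMk hg.1))
  | succ N ih =>
    intro F G H _ _ _ _ _ _ B p q f g hpq hf hg
    have hC : ContDiff ℝ (⊤ : ℕ∞) (fun x => B (f x) (g x)) :=
      B.isBoundedBilinearMap.contDiff.comp (hf.1.prodMk hg.1)
    rcases Nat.eq_zero_or_pos (p + q) with h0 | h1
    · obtain ⟨rfl, rfl⟩ : p = 0 ∧ q = 0 := by omega
      exact flat_of_contDiff hC
    -- value at 0 vanishes
    have hval : B (f 0) (g 0) = 0 := by
      rcases Nat.eq_zero_or_pos p with hp | hp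
      · have : g 0 = 0 := hg.zero_eq (by omega)
        rw [this, map_zero]
      · have : f 0 = 0 := hf.zero_eq hp
        rw [this, map_zero, ContinuousLinearMap.zero_apply]
    -- the two bilinear maps appearing in the derivative
    set T1 : G →L[ℝ] (E →L[ℝ] F) →L[ℝ] (E →L[ℝ] H) :=
      (ContinuousLinearMap.compL ℝ E F H).comp B.flip with hT1
    set T2 : F →L[ℝ] (E →L[ℝ] G) →L[ℝ] (E →L[ℝ] H) :=
      (ContinuousLinearMap.compL ℝ E G H).comp B with hT2
    have hder : fderiv ℝ (fun x => B (f x) (g x)) =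
        fun x => T1 (g x) (fderiv ℝ f x) + T2 (f x) (fderiv ℝ g x) := by
      funext x
      have hfd := (hf.1.differentiable (by simp) x).hasFDerivAt
      have hgd := (hg.1.differentiable (by simp) x).hasFDerivAt
      have hb := (B.isBoundedBilinearMap.hasFDerivAt (f x, g x)).comp x (hfd.prodMk hgd)
      have : HasFDerivAt (fun x => B (f x) (g x))
          (T1 (g x) (fderiv ℝ f x) + T2 (f x) (fderiv ℝ g x)) x := by
        convert hb using 1
        · rfl
        ext v
        simp [hT1, hT2, ContinuousLinearMap.compL]
        abel
      exact this.fderiv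
    have hfd' : Flat (p - 1) (fderiv ℝ f) := hf.fderiv'
    have hgd' : Flat (q - 1) (fderiv ℝ g) := hg.fderiv'
    have t1 : Flat ((q - (1 - p)) + (p - 1)) (fun x => T1 (g x) (fderiv ℝ f x)) :=
      ih T1 _ _ _ _ (by omega) (hg.mono (by omega)) hfd'
    have t2 : Flat ((p - (1 - q)) + (q - 1)) (fun x => T2 (f x) (fderiv ℝ g x)) :=
      ih T2 _ _ _ _ (by omega) (hf.mono (by omega)) hgd'
    have hsum : Flat (p + q - 1)
        (fun x => T1 (g x) (fderiv ℝ f x) + T2 (f x) (fderiv ℝ g x)) :=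
      (t1.mono (by omega)).add (t2.mono (by omega))
    have := flat_succ hC hval (hder ▸ hsum)
    have heq : p + q - 1 + 1 = p + q := by omega
    rwa [heq] at this

theorem Flat.mul {p q : ℕ} {f g : E → ℝ} (hf : Flat p f) (hg : Flat q g) :
    Flat (p + q) (fun x => f x * g x) :=
  flat_bilin (p + q) (ContinuousLinearMap.mul ℝ ℝ) p q f g le_rfl hf hg

theorem Flat.comp_left {p : ℕ} {f : E → ℝ} (σ : ℝ → ℝ) (hσ : ContDiff ℝ (⊤ : ℕ∞) σ)
    (hσ0 : σ 0 = 0) (hf : Flat p f) : Flat p (fun x => σ (f x)) := by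
  rcases Nat.eq_zero_or_pos p with rfl | hp
  · exact flat_of_contDiff (hσ.comp hf.1)
  obtain ⟨p, rfl⟩ : ∃ p', p = p' + 1 := ⟨p - 1, by omega⟩
  have hC : ContDiff ℝ (⊤ : ℕ∞) (fun x => σ (f x)) := hσ.comp hf.1
  have hval : σ (f 0) = 0 := by rw [hf.zero_eq (by omega), hσ0]
  refine flat_succ hC hval ?_
  have hder : fderiv ℝ (fun x => σ (f x)) =
      fun x => (ContinuousLinearMap.compL ℝ E ℝ ℝ) (fderiv ℝ σ (f x)) (fderiv ℝ f x) := by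
    funext x
    exact ((hσ.differentiable (by simp) (f x)).hasFDerivAt.comp x
      (hf.1.differentiable (by simp) x).hasFDerivAt).fderiv
  rw [hder]
  have h1 : Flat 0 (fun x => fderiv ℝ σ (f x)) :=
    flat_of_contDiff ((hσ.fderiv_right (by simp)).comp hf.1)
  have h2 : Flat p (fderiv ℝ f) := by
    have := hf.fderiv'
    simpa using this
  simpa using flat_bilin p (ContinuousLinearMap.compL ℝ E ℝ ℝ) 0 p _ _ (by omega) h1 h2

end FlatLemmas

section Network

variable {dx R n : ℕ}

theorem flat_proj (r : Fin R) (l : Fin n) (i j : Fin dx) :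
    Flat 1 (fun w : Fin R → Fin n → Fin dx → Fin dx → ℝ => w r l i j) := by
  refine ⟨?_, fun j' hj' => ?_⟩
  · exact contDiff_pi.mp (contDiff_pi.mp (contDiff_pi.mp (contDiff_pi.mp contDiff_id r) l) i) j
  · interval_cases j'
    ext m
    simp [iteratedFDeriv_zero_apply]

theorem flat_chain (σmid : ℝ → ℝ) (hmid : ContDiff ℝ (⊤ : ℕ∞) σmid) (hmid0 : σmid 0 = 0)
    (r : ℕ) (hr : r < R)
    (v : (Fin R → Fin n → Fin dx → Fin dx → ℝ) → Fin dx → ℝ)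
    (hv : ∀ j, ContDiff ℝ (⊤ : ℕ∞) (fun w => v w j)) :
    ∀ k, k ≤ n → ∀ i, Flat k (fun w => chain σmid (extendW w r) k (v w) i) := by
  intro k
  induction k with
  | zero => intro _ i; exact flat_of_contDiff (hv i)
  | succ k ih =>
    intro hk i
    have hkn : k < n := by omega
    have hinner : ∀ j, Flat k
        (fun w => (if k = 0 then v w else emap σmid (chain σmid (extendW w r) k (v w))) j) := by
      intro j
      rcases Nat.eq_zero_or_pos k with rfl | hkpos
      · simpa using flat_of_contDiff (hv j)
      · simp only [if_neg (show ¬ k = 0 by omega), emap]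
        exact Flat.comp_left σmid hmid hmid0 (ih (by omega) j)
    have hproj : ∀ j, Flat 1 (fun w : Fin R → Fin n → Fin dx → Fin dx → ℝ =>
        extendW w r k i j) := by
      intro j
      have : (fun w : Fin R → Fin n → Fin dx → Fin dx → ℝ => extendW w r k i j) =
          fun w => w ⟨r, hr⟩ ⟨k, hkn⟩ i j := by
        funext w
        simp [extendW, hr, hkn]
      rw [this]
      exact flat_proj _ _ _ _
    have heq : (fun w => chain σmid (extendW w r) (k + 1) (v w) i) =
        fun w => ∑ j, extendW w r k i j *
          (if k = 0 then v w else emap σmid (chain σmid (extendW w r) k (v w))) j := by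
      funext w
      simp [chain, mvec]
    rw [heq]
    have := Flat.sum (p := 1 + k) Finset.univ
      (fun j (_ : j ∈ Finset.univ) => (hproj j).mul (hinner j))
    simpa [Nat.add_comm 1 k] using this

theorem flat_net (σpre σmid σpost : ℝ → ℝ)
    (hpre : ContDiff ℝ (⊤ : ℕ∞) σpre) (hmid : ContDiff ℝ (⊤ : ℕ∞) σmid) (hpost : ContDiff ℝ (⊤ : ℕ∞) σpost)
    (hmid0 : σmid 0 = 0) (hpost0 : σpost 0 = 0) (x : Fin dx → ℝ) :
    ∀ r, r ≤ R → ∀ i, Flat n (fun w : Fin R → Fin n → Fin dx → Fin dx → ℝ =>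
      net σpre σmid σpost n (extendW w) r x i - x i) := by
  intro r
  induction r with
  | zero =>
    intro _ i
    simpa [net] using flat_zero_fun (E := Fin R → Fin n → Fin dx → Fin dx → ℝ) (F := ℝ) n
  | succ r ih =>
    intro hr i
    have hrR : r < R := by omega
    have hcd : ∀ j, ContDiff ℝ (⊤ : ℕ∞)
        (fun w : Fin R → Fin n → Fin dx → Fin dx → ℝ =>
          net σpre σmid σpost n (extendW w) r x j) := by
      intro j
      have h1 := (ih (by omega) j).contDiff
      have : (fun w : Fin R → Fin n → Fin dx → Fin dx → ℝ =>
          net σpre σmid σpost n (extendW w) r x j) =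
          fun w => (net σpre σmid σpost n (extendW w) r x j - x j) + x j := by
        funext w; ring
      rw [this]
      exact h1.add contDiff_const
    have hv : ∀ j, ContDiff ℝ (⊤ : ℕ∞)
        (fun w : Fin R → Fin n → Fin dx → Fin dx → ℝ =>
          emap σpre (net σpre σmid σpost n (extendW w) r x) j) := by
      intro j
      simp only [emap]
      exact hpre.comp (hcd j)
    have hchain := flat_chain σmid hmid hmid0 r hrR
      (fun w => emap σpre (net σpre σmid σpost n (extendW w) r x)) hv n le_rfl i
    have hres : Flat n (fun w => σpost
        (chain σmid (extendW w r) n (emap σpre (net σpre σmid σpost n (extendW w) r x)) i)) :=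
      Flat.comp_left σpost hpost hpost0 hchain
    have heq : (fun w : Fin R → Fin n → Fin dx → Fin dx → ℝ =>
        net σpre σmid σpost n (extendW w) (r + 1) x i - x i) =
        fun w => σpost (chain σmid (extendW w r) n
          (emap σpre (net σpre σmid σpost n (extendW w) r x)) i) +
          (net σpre σmid σpost n (extendW w) r x i - x i) := by
      funext w
      simp only [net, resUnit]
      ring
    rw [heq]
    exact hres.add (ih (by omega) i)

theorem chain_zeroW (σmid : ℝ → ℝ) (r k : ℕ) (v : Fin dx → ℝ) :
    chain σmid (extendW (0 : Fin R → Fin n → Fin dx → Fin dx → ℝ) r) (k + 1) v = fun _ => 0 := by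
  funext i
  simp [chain, mvec, extendW]

theorem net_zeroW (σpre σmid σpost : ℝ → ℝ) (hn : 1 ≤ n) (hpost0 : σpost 0 = 0)
    (x : Fin dx → ℝ) :
    ∀ r, net σpre σmid σpost n (extendW (0 : Fin R → Fin n → Fin dx → Fin dx → ℝ)) r x = x := by
  obtain ⟨n', rfl⟩ : ∃ n', n = n' + 1 := ⟨n - 1, by omega⟩
  intro r
  induction r with
  | zero => rfl
  | succ r ih =>
    funext i
    simp only [net, resUnit, ih, chain_zeroW, hpost0, zero_add]

end Network

/-- Theorem 2, part 1. For an `n`-shortcut network with `n ≥ 2` and smooth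
activations satisfying `σmid 0 = 0` and `σpost 0 = 0`, the zero weight configuration is an
`(n-1)`-th order stationary point of the loss: every `k`-th derivative with `1 ≤ k ≤ n - 1`
vanishes at `0`. -/

theorem zero_is_high_order_stationary_point
    {dx m R n : ℕ} (hn : 2 ≤ n)
    (σpre σmid σpost : ℝ → ℝ)
    (hpre : ContDiff ℝ (⊤ : ℕ∞) σpre) (hmid : ContDiff ℝ (⊤ : ℕ∞) σmid) (hpost : ContDiff ℝ (⊤ : ℕ∞) σpost)
    (hmid0 : σmid 0 = 0) (hpost0 : σpost 0 = 0)
    (X Y : Fin m → Fin dx → ℝ)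
    (k : ℕ) (hk1 : 1 ≤ k) (hk2 : k ≤ n - 1) :
    iteratedFDeriv ℝ k (loss σpre σmid σpost n R X Y) 0 = 0 := by
  have hφ : ∀ (μ : Fin m) (i : Fin dx), Flat n
      (fun w : Fin R → Fin n → Fin dx → Fin dx → ℝ =>
        net σpre σmid σpost n (extendW w) R (X μ) i - X μ i) :=
    fun μ i => flat_net σpre σmid σpost hpre hmid hpost hmid0 hpost0 (X μ) R le_rfl i
  have hnz : ∀ μ : Fin m,
      net σpre σmid σpost n (extendW (0 : Fin R → Fin n → Fin dx → Fin dx → ℝ)) R (X μ) = X μ :=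
    fun μ => net_zeroW σpre σmid σpost (by omega) hpost0 (X μ) R
  set g : (Fin R → Fin n → Fin dx → Fin dx → ℝ) → ℝ := fun w =>
    (1 / (2 * (m : ℝ))) * ∑ μ : Fin m, ∑ i,
      ((net σpre σmid σpost n (extendW w) R (X μ) i - X μ i) ^ 2 +
        2 * (X μ i - Y μ i) * (net σpre σmid σpost n (extendW w) R (X μ) i - X μ i)) with hgdef
  have hloss : loss σpre σmid σpost n R X Y =
      fun w => loss σpre σmid σpost n R X Y 0 + g w := by
    funext w
    simp only [loss, hgdef]
    rw [← mul_add, ← Finset.sum_add_distrib]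
    congr 1
    refine Finset.sum_congr rfl fun μ _ => ?_
    rw [← Finset.sum_add_distrib]
    refine Finset.sum_congr rfl fun i _ => ?_
    rw [hnz μ]
    ring
  have hg : Flat n g := by
    have hsum : Flat n (fun w : Fin R → Fin n → Fin dx → Fin dx → ℝ =>
        ∑ μ : Fin m, ∑ i,
          ((net σpre σmid σpost n (extendW w) R (X μ) i - X μ i) ^ 2 +
            2 * (X μ i - Y μ i) * (net σpre σmid σpost n (extendW w) R (X μ) i - X μ i))) := by
      refine Flat.sum Finset.univ fun μ _ => Flat.sum Finset.univ fun i _ => ?_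
      have hsq : Flat n (fun w : Fin R → Fin n → Fin dx → Fin dx → ℝ =>
          (net σpre σmid σpost n (extendW w) R (X μ) i - X μ i) ^ 2) := by
        have := ((hφ μ i).mul (hφ μ i)).mono (by omega : n ≤ n + n)
        simpa [pow_two] using this
      have hlin : Flat n (fun w : Fin R → Fin n → Fin dx → Fin dx → ℝ =>
          2 * (X μ i - Y μ i) * (net σpre σmid σpost n (extendW w) R (X μ) i - X μ i)) := by
        have := (flat_of_contDiff (contDiff_const (c := 2 * (X μ i - Y μ i)))).mul (hφ μ i)
        simpa using this
      exact hsq.add hlin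
    have := (flat_of_contDiff (contDiff_const (c := 1 / (2 * (m : ℝ))))).mul hsum
    simpa [hgdef] using this
  rw [hloss]
  have hadd : iteratedFDeriv ℝ k
      ((fun _ : Fin R → Fin n → Fin dx → Fin dx → ℝ =>
        loss σpre σmid σpost n R X Y 0) + g) 0 =
      iteratedFDeriv ℝ k (fun _ : Fin R → Fin n → Fin dx → Fin dx → ℝ =>
        loss σpre σmid σpost n R X Y 0) 0 + iteratedFDeriv ℝ k g 0 :=
    iteratedFDeriv_add_apply (contDiff_const.of_le le_top).contDiffAt (hg.contDiff.of_le (by exact_mod_cast le_top)).contDiffAt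
  have hshow : (fun w => loss σpre σmid σpost n R X Y 0 + g w) =
      (fun _ : Fin R → Fin n → Fin dx → Fin dx → ℝ =>
        loss σpre σmid σpost n R X Y 0) + g := rfl
  rw [hshow, hadd, hg.2 k (by omega), iteratedFDeriv_const_of_ne (by omega : k ≠ 0)]
  simp

end
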